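/- The linear span of {φ_1, …, φ_J} equals the linear span of the indicator functions {1_{(x_{i−1},x_i]} : i = 1, …, J}; equivalently, the functions φ_1, …, φ_J are linearly independent and every piecewise constant function on the partition is a linear combination of φ_1, …, φ_J. -/

import Mathlib

noncomputable section

open Set

/-- Mesh size `h = 2L/J`. -/
def meshH (L : ℝ) (J : ℕ) : ℝ := 2 * L / J

/-- Grid node `x_i = −L + i·h`. -/
def nodeX (L : ℝ) (J : ℕ) (i : ℕ) : ℝ := -L + i * meshH L J

/-- The one-dimensional piecewise constant basis functions `φ_i`, `i = 1, …, J`: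
`φ_1 = (3/2)·1_{[x_0,x_1]} − (1/2)·1_{(x_1,x_2]}`,
`φ_i = −(1/2)·1_{(x_{i−2},x_{i−1}]} + 1_{(x_{i−1},x_i]} − (1/2)·1_{(x_i,x_{i+1}]}`
for `2 ≤ i ≤ J−1`, and
`φ_J = −(1/2)·1_{(x_{J−2},x_{J−1}]} + (3/2)·1_{(x_{J−1},x_J]}` (zero outside). -/
def phiF (L : ℝ) (J : ℕ) (i : ℕ) : ℝ → ℝ := fun x =>
  if i = 1 then
    (if x ∈ Icc (nodeX L J 0) (nodeX L J 1) then (3 : ℝ) / 2 else 0)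
      + (if x ∈ Ioc (nodeX L J 1) (nodeX L J 2) then -(1 : ℝ) / 2 else 0)
  else if i = J then
    (if x ∈ Ioc (nodeX L J (J - 2)) (nodeX L J (J - 1)) then -(1 : ℝ) / 2 else 0)
      + (if x ∈ Ioc (nodeX L J (J - 1)) (nodeX L J J) then (3 : ℝ) / 2 else 0)
  else
    (if x ∈ Ioc (nodeX L J (i - 2)) (nodeX L J (i - 1)) then -(1 : ℝ) / 2 else 0)
      + (if x ∈ Ioc (nodeX L J (i - 1)) (nodeX L J i) then (1 : ℝ) else 0)
      + (if x ∈ Ioc (nodeX L J i) (nodeX L J (i + 1)) then -(1 : ℝ) / 2 else 0)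

/-- The one-dimensional piecewise quadratic functions `ψ_i = (−Δ)⁻¹ φ_i`,
extended by `0` outside their support. -/
def psiF (L : ℝ) (J : ℕ) (i : ℕ) : ℝ → ℝ := fun x =>
  if i = 1 then
    (if x ∈ Icc (nodeX L J 0) (nodeX L J 1) then
        -(3 : ℝ) / 4 * (x - nodeX L J 0) ^ 2 + meshH L J * (x - nodeX L J 0) else 0)
      + (if x ∈ Ioc (nodeX L J 1) (nodeX L J 2) then
        (1 : ℝ) / 4 * (x - nodeX L J 1) ^ 2 - meshH L J / 2 * (x - nodeX L J 1)
          + (meshH L J) ^ 2 / 4 else 0)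
  else if i = J then
    (if x ∈ Ioc (nodeX L J (J - 2)) (nodeX L J (J - 1)) then
        (1 : ℝ) / 4 * (nodeX L J (J - 1) - x) ^ 2 - meshH L J / 2 * (nodeX L J (J - 1) - x)
          + (meshH L J) ^ 2 / 4 else 0)
      + (if x ∈ Ioc (nodeX L J (J - 1)) (nodeX L J J) then
        -(3 : ℝ) / 4 * (nodeX L J J - x) ^ 2 + meshH L J * (nodeX L J J - x) else 0)
  else
    (if x ∈ Ioc (nodeX L J (i - 2)) (nodeX L J (i - 1)) then
        (1 : ℝ) / 4 * (x - nodeX L J (i - 2)) ^ 2 else 0)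
      + (if x ∈ Ioc (nodeX L J (i - 1)) (nodeX L J i) then
        -(1 : ℝ) / 2 * (x - nodeX L J (i - 1) - meshH L J / 2) ^ 2
          + 3 * (meshH L J) ^ 2 / 8 else 0)
      + (if x ∈ Ioc (nodeX L J i) (nodeX L J (i + 1)) then
        (1 : ℝ) / 4 * (nodeX L J (i + 1) - x) ^ 2 else 0)

/-- midpoint of the interval `(x_k, x_{k+1})`. -/
def midP (L : ℝ) (J : ℕ) (k : ℕ) : ℝ := -L + ((k : ℝ) + 1/2) * meshH L J

lemma meshH_pos {L : ℝ} {J : ℕ} (hL : 0 < L) (hJ : 0 < J) : 0 < meshH L J := by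
  have : (0:ℝ) < J := by exact_mod_cast hJ
  exact div_pos (by linarith) this

lemma nodeX_zero (L : ℝ) (J : ℕ) : nodeX L J 0 = -L := by simp [nodeX]

lemma midP_mem_Ioc {L : ℝ} {J : ℕ} (hL : 0 < L) (hJ : 0 < J) (a b k : ℕ) :
    midP L J k ∈ Ioc (nodeX L J a) (nodeX L J b) ↔ a ≤ k ∧ k < b := by
  have h0 := meshH_pos hL hJ
  rw [mem_Ioc, nodeX, nodeX, midP]
  constructor
  · rintro ⟨h1, h2⟩
    have ha : (a:ℝ) < (k:ℝ) + 1/2 := by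
      have := (mul_lt_mul_iff_left₀ h0).mp (by linarith : (a:ℝ) * meshH L J < ((k:ℝ)+1/2) * meshH L J)
      exact this
    have hb : (k:ℝ) + 1/2 ≤ (b:ℝ) := by
      have := (mul_le_mul_iff_left₀ h0).mp (by linarith : ((k:ℝ)+1/2) * meshH L J ≤ (b:ℝ) * meshH L J)
      exact this
    constructor
    · have : (a:ℝ) < (k:ℝ) + 1 := by linarith
      have := Nat.cast_lt (α := ℝ) |>.mp (by push_cast; linarith : (a:ℝ) < ((k+1:ℕ):ℝ))
      omega
    · have : (k:ℝ) < (b:ℝ) := by linarith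
      exact_mod_cast this
  · rintro ⟨ha, hb⟩
    have ha' : (a:ℝ) ≤ (k:ℝ) := by exact_mod_cast ha
    have hb' : (k:ℝ) + 1 ≤ (b:ℝ) := by exact_mod_cast hb
    constructor
    · have : (a:ℝ) * meshH L J < ((k:ℝ)+1/2) * meshH L J := by
        apply mul_lt_mul_of_pos_right _ h0; linarith
      linarith
    · have : ((k:ℝ)+1/2) * meshH L J ≤ (b:ℝ) * meshH L J := by
        apply mul_le_mul_of_nonneg_right _ h0.le; linarith
      linarith

lemma midP_mem_Icc01 {L : ℝ} {J : ℕ} (hL : 0 < L) (hJ : 0 < J) (k : ℕ) :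
    midP L J k ∈ Icc (nodeX L J 0) (nodeX L J 1) ↔ k = 0 := by
  have h0 := meshH_pos hL hJ
  constructor
  · rintro ⟨h1, h2⟩
    have : midP L J k ∈ Ioc (nodeX L J 0) (nodeX L J 1) := by
      refine ⟨?_, h2⟩
      rw [nodeX_zero, midP]
      nlinarith [h0, (Nat.cast_nonneg k : (0:ℝ) ≤ k)]
    have := (midP_mem_Ioc hL hJ 0 1 k).mp this
    omega
  · rintro rfl
    have := (midP_mem_Ioc hL hJ 0 1 0).mpr ⟨le_refl _, by omega⟩
    exact ⟨le_of_lt this.1, this.2⟩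

lemma midP_mem {L : ℝ} {J : ℕ} (hL : 0 < L) (hJ : 0 < J) {k : ℕ} (hk : k < J) :
    midP L J k ∈ Ioc (-L) L := by
  have h := (midP_mem_Ioc hL hJ 0 J k).mpr ⟨Nat.zero_le _, hk⟩
  rw [nodeX_zero] at h
  have hJne : (J:ℝ) ≠ 0 := by positivity
  have : nodeX L J J = L := by
    rw [nodeX, meshH]; field_simp; ring
  rwa [this] at h

def matM (J : ℕ) (i k : ℕ) : ℝ :=
  (if i = k then (if k = 0 ∨ k + 1 = J then (3:ℝ)/2 else 1) else 0)
  + (if i + 1 = k then -(1:ℝ)/2 else 0) + (if k + 1 = i then -(1:ℝ)/2 else 0)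

lemma phi_eval {L : ℝ} {J : ℕ} (hL : 0 < L) (hJ : 3 ≤ J) (i : ℕ) {k : ℕ} (hk : k < J) :
    phiF L J (i + 1) (midP L J k) = matM J i k := by
  have hJ0 : 0 < J := by omega
  rw [phiF, matM]
  simp only [midP_mem_Ioc hL hJ0, midP_mem_Icc01 hL hJ0]
  split_ifs <;> norm_num <;> omega

lemma sum_ite_val {J : ℕ} (f : Fin J → ℝ) {c : ℕ} (hc : c < J) :
    ∑ i : Fin J, (if (i:ℕ) = c then f i else 0) = f ⟨c, hc⟩ := by
  rw [Finset.sum_eq_single (⟨c, hc⟩ : Fin J)]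
  · simp
  · intro b _ hb; rw [if_neg]; simpa [Fin.ext_iff] using hb
  · simp

lemma col_sum {J : ℕ} (g : Fin J → ℝ) {k : ℕ} (hk : k < J) :
    ∑ i : Fin J, g i * matM J i k =
      g ⟨k, hk⟩ * (if k = 0 ∨ k + 1 = J then (3:ℝ)/2 else 1)
      + (if h : k + 1 < J then g ⟨k+1, h⟩ * (-(1:ℝ)/2) else 0)
      + (if h : 0 < k then g ⟨k-1, by omega⟩ * (-(1:ℝ)/2) else 0) := by
  have key : ∀ i : Fin J, g i * matM J i k
      = (if (i:ℕ) = k then g i * (if k = 0 ∨ k+1 = J then (3:ℝ)/2 else 1) else 0)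
        + (if (i:ℕ) = k+1 then g i * (-(1:ℝ)/2) else 0)
        + (if (i:ℕ) = k-1 ∧ 0 < k then g i * (-(1:ℝ)/2) else 0) := by
    intro i
    rw [matM]
    split_ifs <;> first | ring1 | omega | (exfalso; omega)
  rw [Finset.sum_congr rfl (fun i _ => key i), Finset.sum_add_distrib, Finset.sum_add_distrib,
    sum_ite_val _ hk]
  congr 1
  · congr 1
    by_cases hk1 : k + 1 < J
    · rw [dif_pos hk1, sum_ite_val _ hk1]
    · rw [dif_neg hk1, Finset.sum_eq_zero]
      intro i _
      rw [if_neg]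
      omega
  · by_cases hk0 : 0 < k
    · have hkm : k - 1 < J := by omega
      rw [dif_pos hk0]
      simp only [hk0, and_true]
      rw [sum_ite_val _ hkm]
    · rw [dif_neg hk0, Finset.sum_eq_zero]
      intro i _
      rw [if_neg]
      omega

lemma indep_coeffs {J : ℕ} (hJ : 3 ≤ J) (g : Fin J → ℝ)
    (H : ∀ k : Fin J, ∑ i : Fin J, g i * matM J i k = 0) :
    ∀ i, g i = 0 := by
  have h0J : (0:ℕ) < J := by omega
  set G : ℕ → ℝ := fun n => if h : n < J then g ⟨n, h⟩ else 0 with hG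
  have gG : ∀ (n : ℕ) (hn : n < J), g ⟨n, hn⟩ = G n := by
    intro n hn
    simp only [hG]
    rw [dif_pos hn]
  have HG : ∀ (k : ℕ), k < J →
      G k * (if k = 0 ∨ k + 1 = J then (3:ℝ)/2 else 1)
      + (if k + 1 < J then G (k+1) * (-(1:ℝ)/2) else 0)
      + (if 0 < k then G (k-1) * (-(1:ℝ)/2) else 0) = 0 := by
    intro k hk
    have h := H ⟨k, hk⟩
    rw [col_sum g hk] at h
    simp only [gG] at h
    split_ifs at h ⊢ <;> simpa using h
  set c := G 0 with hc
  have claim : ∀ n, n < J → G n = (2 * n + 1) * c := by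
    intro n
    induction n using Nat.strong_induction_on with
    | _ n ih =>
      match n with
      | 0 => intro _; push_cast; ring
      | 1 =>
        intro hn
        have h := HG 0 h0J
        rw [if_pos (Or.inl rfl), if_pos (by omega : (0:ℕ)+1 < J),
          if_neg (by omega : ¬ (0:ℕ) < 0)] at h
        push_cast
        linarith
      | (m+2) =>
        intro hn
        have h := HG (m+1) (by omega)
        rw [if_neg (by omega), if_pos (by omega : m+1+1 < J), if_pos (by omega : 0 < m+1)] at h
        simp only [Nat.add_sub_cancel, show m+1+1 = m+2 from rfl] at h
        have e1 : G (m+1) = (2 * (m+1:ℕ) + 1) * c := ih (m+1) (by omega) (by omega)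
        have e2 : G m = (2 * (m:ℕ) + 1) * c := ih m (by omega) (by omega)
        rw [e1, e2] at h
        push_cast at h ⊢
        linarith
  have hJ1 : J - 1 < J := by omega
  have h := HG (J-1) hJ1
  rw [if_pos (Or.inr (by omega)), if_neg (by omega : ¬ (J-1+1 < J)),
    if_pos (by omega : 0 < J-1)] at h
  rw [show J-1-1 = J-2 by omega] at h
  have e1 : G (J-1) = (2*((J:ℝ)-1) + 1) * c := by
    rw [claim (J-1) hJ1]
    congr 2
    push_cast [Nat.cast_sub (by omega : 1 ≤ J)]
    ring
  have e2 : G (J-2) = (2*((J:ℝ)-2) + 1) * c := by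
    rw [claim (J-2) (by omega)]
    congr 2
    push_cast [Nat.cast_sub (by omega : 2 ≤ J)]
    ring
  rw [e1, e2] at h
  have hc0 : c * (2 * (J:ℝ)) = 0 := by linear_combination h
  have hJR : (2:ℝ) * (J:ℝ) ≠ 0 := by
    have : (0:ℝ) < J := by exact_mod_cast h0J
    positivity
  have hc0' : c = 0 := by
    rcases mul_eq_zero.mp hc0 with h' | h'
    · exact h'
    · exact absurd h' hJR
  intro i
  rw [show i = (⟨i.val, i.isLt⟩ : Fin J) from rfl, gG i.val i.isLt, claim i.val i.isLt,
    hc0', mul_zero]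

/-- The proposed one-dimensional finite element basis is equivalent to a piecewise
constant approximation: the functions `φ_1, …, φ_J` (viewed on `(−L, L]`, i.e. up to
the left boundary node) are linearly independent and their span equals the span of
the indicator functions `1_{(x_{i−1}, x_i]}`, `i = 1, …, J`. -/
theorem stmt18 (L : ℝ) (hL : 0 < L) (J : ℕ) (hJ : 3 ≤ J) :
    LinearIndependent ℝ
      (fun i : Fin J => fun x : Ioc (-L) L => phiF L J ((i : ℕ) + 1) (x : ℝ)) ∧
    Submodule.span ℝ
        (Set.range fun i : Fin J =>
          fun x : Ioc (-L) L => phiF L J ((i : ℕ) + 1) (x : ℝ))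
      = Submodule.span ℝ
        (Set.range fun i : Fin J =>
          fun x : Ioc (-L) L =>
            if (x : ℝ) ∈ Ioc (nodeX L J (i : ℕ)) (nodeX L J ((i : ℕ) + 1))
            then (1 : ℝ) else 0) := by
  have hJ0 : 0 < J := by omega
  set Φ : Fin J → (Ioc (-L) L → ℝ) :=
    fun i : Fin J => fun x : Ioc (-L) L => phiF L J ((i : ℕ) + 1) (x : ℝ) with hΦ
  set E : Fin J → (Ioc (-L) L → ℝ) :=
    fun i : Fin J => fun x : Ioc (-L) L =>
      if (x : ℝ) ∈ Ioc (nodeX L J (i : ℕ)) (nodeX L J ((i : ℕ) + 1))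
      then (1 : ℝ) else 0 with hE
  have hmid : ∀ k : Fin J, midP L J (k : ℕ) ∈ Ioc (-L) L := fun k => midP_mem hL hJ0 k.isLt
  -- linear independence of Φ
  have hΦindep : LinearIndependent ℝ Φ := by
    rw [Fintype.linearIndependent_iff]
    intro g hg
    apply indep_coeffs hJ g
    intro k
    have h := congrFun hg ⟨midP L J (k : ℕ), hmid k⟩
    simp only [Finset.sum_apply, Pi.smul_apply, smul_eq_mul, Pi.zero_apply, hΦ] at h
    rw [← h]
    apply Finset.sum_congr rfl
    intro i _
    congr 1
    exact (phi_eval hL hJ (i : ℕ) k.isLt).symm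
  -- linear independence of E
  have hEindep : LinearIndependent ℝ E := by
    rw [Fintype.linearIndependent_iff]
    intro g hg j
    have h := congrFun hg ⟨midP L J (j : ℕ), hmid j⟩
    simp only [Finset.sum_apply, Pi.smul_apply, smul_eq_mul, Pi.zero_apply, hE] at h
    have h2 : ∑ i : Fin J, (if (i:ℕ) = (j:ℕ) then g i else 0) = 0 := by
      refine Eq.trans ?_ h
      refine Finset.sum_congr rfl fun i _ => ?_
      simp only [midP_mem_Ioc hL hJ0]
      split_ifs <;> first | ring1 | (exfalso; omega)
    rw [sum_ite_val g j.isLt] at h2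
    simpa using h2
  -- each Φ i lies in the span of the E's
  have hsub : ∀ i : Fin J, Φ i ∈ Submodule.span ℝ (Set.range E) := by
    intro i
    by_cases h0 : (i : ℕ) = 0
    · have heq : Φ i = (3/2 : ℝ) • E ⟨0, hJ0⟩ + (-(1:ℝ)/2) • E ⟨1, by omega⟩ := by
        funext x
        obtain ⟨x, hx⟩ := x
        simp only [hΦ, hE, Pi.add_apply, Pi.smul_apply, smul_eq_mul, phiF]
        rw [if_pos (by omega : (i:ℕ) + 1 = 1)]
        have hIcc : x ∈ Icc (nodeX L J 0) (nodeX L J 1) ↔ x ∈ Ioc (nodeX L J 0) (nodeX L J 1) := by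
          rw [mem_Icc, mem_Ioc, nodeX_zero]
          have := hx.1
          constructor
          · rintro ⟨_, h2⟩; exact ⟨this, h2⟩
          · rintro ⟨h1, h2⟩; exact ⟨le_of_lt h1, h2⟩
        simp only [hIcc, Fin.val_mk, show (0:ℕ)+1 = 1 from rfl, show (1:ℕ)+1 = 2 from rfl]
        split_ifs <;> ring
      rw [heq]
      exact Submodule.add_mem _
        (Submodule.smul_mem _ _ (Submodule.subset_span ⟨_, rfl⟩))
        (Submodule.smul_mem _ _ (Submodule.subset_span ⟨_, rfl⟩))
    · by_cases hlast : (i : ℕ) + 1 = J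
      · have heq : Φ i = (-(1:ℝ)/2) • E ⟨J - 2, by omega⟩ + (3/2 : ℝ) • E ⟨J - 1, by omega⟩ := by
          funext x
          obtain ⟨x, hx⟩ := x
          simp only [hΦ, hE, Pi.add_apply, Pi.smul_apply, smul_eq_mul, phiF]
          rw [if_neg (by omega : ¬ ((i:ℕ) + 1 = 1)), if_pos hlast]
          simp only [Fin.val_mk, show J - 2 + 1 = J - 1 by omega, show J - 1 + 1 = J by omega]
          split_ifs <;> ring
        rw [heq]
        exact Submodule.add_mem _
          (Submodule.smul_mem _ _ (Submodule.subset_span ⟨_, rfl⟩))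
          (Submodule.smul_mem _ _ (Submodule.subset_span ⟨_, rfl⟩))
      · have heq : Φ i = (-(1:ℝ)/2) • E ⟨(i:ℕ) - 1, by omega⟩ + E i
            + (-(1:ℝ)/2) • E ⟨(i:ℕ) + 1, by omega⟩ := by
          funext x
          obtain ⟨x, hx⟩ := x
          simp only [hΦ, hE, Pi.add_apply, Pi.smul_apply, smul_eq_mul, phiF]
          rw [if_neg (by omega : ¬ ((i:ℕ) + 1 = 1)), if_neg (by omega : ¬ ((i:ℕ) + 1 = J))]
          simp only [Fin.val_mk, show (i:ℕ) + 1 - 2 = (i:ℕ) - 1 by omega,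
            show (i:ℕ) + 1 - 1 = (i:ℕ) by omega, show (i:ℕ) - 1 + 1 = (i:ℕ) by omega]
          split_ifs <;> ring
        rw [heq]
        exact Submodule.add_mem _
          (Submodule.add_mem _
            (Submodule.smul_mem _ _ (Submodule.subset_span ⟨_, rfl⟩))
            (Submodule.subset_span ⟨_, rfl⟩))
          (Submodule.smul_mem _ _ (Submodule.subset_span ⟨_, rfl⟩))
  have hle : Submodule.span ℝ (Set.range Φ) ≤ Submodule.span ℝ (Set.range E) := by
    rw [Submodule.span_le]
    rintro _ ⟨i, rfl⟩
    exact hsub i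
  have hfinE : FiniteDimensional ℝ (Submodule.span ℝ (Set.range E)) :=
    FiniteDimensional.span_of_finite ℝ (Set.finite_range E)
  have h1 : Module.finrank ℝ (Submodule.span ℝ (Set.range Φ)) = J := by
    rw [finrank_span_eq_card hΦindep, Fintype.card_fin]
  have h2 : Module.finrank ℝ (Submodule.span ℝ (Set.range E)) = J := by
    rw [finrank_span_eq_card hEindep, Fintype.card_fin]
  exact ⟨hΦindep, Submodule.eq_of_le_of_finrank_eq hle (by rw [h1, h2])⟩


end
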